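/- Let F be a closed face of a Choquet simplex X and let x₀ ∈ X \ F. Then there exists a continuous affine function f : X → [0, ∞) with f|_F = 0 and f(x₀) > 0. -/

import Mathlib

noncomputable section

open MeasureTheory

/-- The Baire σ-algebra of a topological space: the σ-algebra generated by the zero sets
of continuous real-valued functions. -/
def baireSigma (Y : Type*) [TopologicalSpace Y] : MeasurableSpace Y :=
  MeasurableSpace.generateFrom {s : Set Y | ∃ f : Y → ℝ, Continuous f ∧ s = f ⁻¹' {0}}

/-- `X` is a Choquet simplex: a compact convex subset of a locally convex space in which
every point is the barycentre of a unique (Baire--Radon) probability measure supported on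
the extreme boundary (i.e. vanishing on every Baire set disjoint from the extreme
points). -/
def IsChoquetSimplex {E : Type*} [AddCommGroup E] [Module ℝ E] [TopologicalSpace E]
    [IsTopologicalAddGroup E] [ContinuousSMul ℝ E] [LocallyConvexSpace ℝ E] [T2Space E]
    (X : Set E) : Prop :=
  IsCompact X ∧ Convex ℝ X ∧
  ∀ x ∈ X,
    letI : MeasurableSpace X := baireSigma X
    ∃! μ : Measure X,
      IsProbabilityMeasure μ ∧
      (∀ ℓ : E →L[ℝ] ℝ, ℓ x = ∫ y : X, ℓ (y : E) ∂μ) ∧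
      (∀ s : Set X, MeasurableSet s →
        Disjoint (Subtype.val '' s) (Set.extremePoints ℝ X) → μ s = 0)


/-!
For a continuous `φ` on `X`, the function `x ↦ ∫ φ dμₓ`, with `μₓ` the unique boundary measure
representing `x`, is affine on `X`: the measure representing a convex combination is the same
combination of representing measures. When `y ∈ F` and `g` is continuous affine with `g ≤ 0` on
`F`, `μ_y` gives no mass to `{g > 0}`, since conditioning on that set would produce a barycentre in
the face `F` at which `g > 0`.

Separate `x₀` from `F` by a continuous affine `b` with `b ≤ 0` on `F`. Given a continuous affine
`p ≥ max b 0` with `p ≤ δ` on `F`, the graph of the affine function `x ↦ ∫ max (b, 0, p - δ) dμₓ`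
lies above the graphs of `b`, `0`, `p - δ` over `X` and below those of `p + δ` over `X` and of
`δ' > 0` over `F`; Hahn–Banach in `E × ℝ` separates the two convex hulls by the graph of a
continuous affine `q`, which is again `≥ max b 0`, is `≤ δ'` on `F`, and is `δ`-close to `p`.
Iterating with `δ = C 2⁻ⁿ` yields a uniformly convergent sequence whose limit is the required `f`.
-/

open MeasureTheory Set Filter Topology ProbabilityTheory

section Geometry

variable {V : Type*} [AddCommGroup V] [Module ℝ V] [TopologicalSpace V]

theorem ContinuousAffineMap.isCompact_graphOn (a : V →ᴬ[ℝ] ℝ) {S : Set V} (hS : IsCompact S) :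
    IsCompact (S.graphOn a) :=
  hS.image (continuous_id.prodMk a.continuous)

theorem ContinuousAffineMap.convex_graphOn (a : V →ᴬ[ℝ] ℝ) {S : Set V} (hS : Convex ℝ S) :
    Convex ℝ (S.graphOn a) :=
  hS.affine_image ((ContinuousAffineMap.id ℝ V).prod a : V →ᵃ[ℝ] V × ℝ)

variable [IsTopologicalAddGroup V] [ContinuousSMul ℝ V]

theorem IsCompact.convexJoin {s t : Set V} (hs : IsCompact s) (ht : IsCompact t) :
    IsCompact (_root_.convexJoin ℝ s t) := by
  have : _root_.convexJoin ℝ s t =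
      (fun q : ℝ × V × V => (1 - q.1) • q.2.1 + q.1 • q.2.2) '' (Icc 0 1 ×ˢ s ×ˢ t) := by
    ext x
    simp only [mem_convexJoin, segment_eq_image, mem_image, mem_prod, Prod.exists]
    constructor
    · rintro ⟨a, ha, b, hb, θ, hθ, rfl⟩
      exact ⟨θ, a, b, ⟨hθ, ha, hb⟩, rfl⟩
    · rintro ⟨θ, a, b, ⟨hθ, ha, hb⟩, rfl⟩
      exact ⟨a, ha, b, hb, θ, hθ, rfl⟩
  rw [this]
  exact (isCompact_Icc.prod (hs.prod ht)).image (by fun_prop)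

theorem IsCompact.convexHull_union {s t : Set V} (hs : IsCompact s) (ht : IsCompact t)
    (hsc : Convex ℝ s) (htc : Convex ℝ t) : IsCompact (convexHull ℝ (s ∪ t)) := by
  rcases s.eq_empty_or_nonempty with rfl | hs₀
  · rwa [empty_union, htc.convexHull_eq]
  rcases t.eq_empty_or_nonempty with rfl | ht₀
  · rwa [union_empty, hsc.convexHull_eq]
  rw [hsc.convexHull_union htc hs₀ ht₀]
  exact hs.convexJoin ht

theorem Finset.isCompact_convexHull_biUnion {ι : Type*} (I : Finset ι) {K : ι → Set V}
    (hK : ∀ i ∈ I, IsCompact (K i)) (hKc : ∀ i ∈ I, Convex ℝ (K i)) :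
    IsCompact (convexHull ℝ (⋃ i ∈ I, K i)) := by
  classical
  induction I using Finset.induction_on with
  | empty => simp
  | insert j I _ ih =>
    simp only [Finset.mem_insert, forall_eq_or_imp] at hK hKc
    rw [Finset.set_biUnion_insert, ← convexHull_convexHull_union_right]
    exact (hK.1.convexHull_union (ih hK.2 hKc.2) hKc.1 (convex_convexHull ℝ _))

end Geometry

section Separation

variable {E : Type*} [AddCommGroup E] [Module ℝ E] [TopologicalSpace E]
  [IsTopologicalAddGroup E] [ContinuousSMul ℝ E] [LocallyConvexSpace ℝ E]

theorem exists_continuousAffineMap_separating {K₁ K₂ : Set (E × ℝ)} (hK₁ : IsCompact K₁)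
    (hK₁c : Convex ℝ K₁) (hK₂ : IsClosed K₂) (hK₂c : Convex ℝ K₂) (hdisj : Disjoint K₁ K₂)
    {x : E} {s t : ℝ} (hs : (x, s) ∈ K₁) (ht : (x, t) ∈ K₂) (hst : s < t) :
    ∃ a : E →ᴬ[ℝ] ℝ, (∀ p ∈ K₁, p.2 < a p.1) ∧ ∀ p ∈ K₂, a p.1 < p.2 := by
  obtain ⟨Λ, r₁, r₂, hΛ₁, hr, hΛ₂⟩ :=
    geometric_hahn_banach_compact_closed hK₁c hK₁ hK₂c hK₂ hdisj
  set γ := Λ (0, 1)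
  have hΛ : ∀ p : E × ℝ, Λ p = Λ (p.1, 0) + p.2 * γ := fun p => by
    rw [← smul_eq_mul, ← map_smul, ← map_add]
    simp
  have hγ : 0 < γ := by
    have h₁ := hΛ₁ _ hs
    have h₂ := hΛ₂ _ ht
    rw [hΛ] at h₁ h₂
    nlinarith
  set a : E →ᴬ[ℝ] ℝ :=
    (-γ⁻¹ • Λ.comp (.inl ℝ E ℝ)).toContinuousAffineMap + .const ℝ E (r₁ / γ)
  have ha : ∀ e, a e = (r₁ - Λ (e, 0)) / γ := fun e => by
    simp only [a, ContinuousAffineMap.coe_add, ContinuousLinearMap.coe_toContinuousAffineMap,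
      FunLike.coe_smul, neg_smul, ContinuousAffineMap.coe_const, Pi.add_apply, Pi.neg_apply,
      Pi.smul_apply, ContinuousLinearMap.comp_apply, ContinuousLinearMap.inl_apply, smul_eq_mul,
      Function.const_apply]
    ring
  refine ⟨a, fun p hp => ?_, fun p hp => ?_⟩
  · rw [ha, lt_div_iff₀ hγ]
    linarith [hΛ p, hΛ₁ p hp]
  · rw [ha, div_lt_iff₀ hγ]
    linarith [hΛ p, hΛ₂ p hp]

theorem exists_continuousAffineMap_between [T2Space E] {X F : Set E} (hX : IsCompact X)
    (hXne : X.Nonempty) (hF : IsCompact F) (hFc : Convex ℝ F) (hFX : F ⊆ X) {Φ : E → ℝ}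
    (hΦ : ConvexOn ℝ X Φ) (hΦ' : ConcaveOn ℝ X Φ) {L : Finset (E →ᴬ[ℝ] ℝ)} (hL : L.Nonempty)
    (hLΦ : ∀ g ∈ L, ∀ x ∈ X, g x ≤ Φ x) {u : E →ᴬ[ℝ] ℝ} (huΦ : ∀ x ∈ X, Φ x < u x) {c : ℝ}
    (hcΦ : ∀ y ∈ F, Φ y < c) :
    ∃ a : E →ᴬ[ℝ] ℝ, (∀ g ∈ L, ∀ x ∈ X, g x < a x) ∧ (∀ x ∈ X, a x < u x) ∧
      ∀ y ∈ F, a y < c := by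
  set K₁ := convexHull ℝ (⋃ g ∈ L, X.graphOn g)
  set K₂ := convexHull ℝ (F.graphOn (ContinuousAffineMap.const ℝ E c) ∪ X.graphOn u)
  have hK₁ : K₁ ⊆ {p | p.1 ∈ X ∧ p.2 ≤ Φ p.1} := by
    refine convexHull_min (iUnion₂_subset fun g hg => ?_) hΦ'.convex_hypograph
    rintro _ ⟨x, hx, rfl⟩
    exact ⟨hx, hLΦ g hg x hx⟩
  have hK₂ : K₂ ⊆ {p | p.1 ∈ X ∧ Φ p.1 < p.2} := by
    refine convexHull_min (union_subset ?_ ?_) hΦ.convex_strict_epigraph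
    · rintro _ ⟨y, hy, rfl⟩
      exact ⟨hFX hy, hcΦ y hy⟩
    · rintro _ ⟨x, hx, rfl⟩
      exact ⟨hx, huΦ x hx⟩
  have hdisj : Disjoint K₁ K₂ :=
    disjoint_left.2 fun p h₁ h₂ => (hK₂ h₂).2.not_ge (hK₁ h₁).2
  obtain ⟨g, hg⟩ := hL
  obtain ⟨x, hx⟩ := hXne
  have hgx : (x, g x) ∈ K₁ := subset_convexHull ℝ _ (mem_biUnion hg ⟨x, hx, rfl⟩)
  have hux : (x, u x) ∈ K₂ := subset_convexHull ℝ _ (Or.inr ⟨x, hx, rfl⟩)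
  obtain ⟨a, ha₁, ha₂⟩ := exists_continuousAffineMap_separating
    (L.isCompact_convexHull_biUnion (fun g _ => g.isCompact_graphOn hX)
      (fun g _ => g.convex_graphOn hΦ.1))
    (convex_convexHull ℝ _)
    ((IsCompact.convexHull_union ((ContinuousAffineMap.const ℝ E c).isCompact_graphOn hF)
      (u.isCompact_graphOn hX) ((ContinuousAffineMap.const ℝ E c).convex_graphOn hFc)
      (u.convex_graphOn hΦ.1)).isClosed)
    (convex_convexHull ℝ _) hdisj hgx hux ((hLΦ g hg x hx).trans_lt (huΦ x hx))
  refine ⟨a, fun g hg x hx => ha₁ (x, g x) ?_, fun x hx => ha₂ (x, u x) ?_,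
    fun y hy => ha₂ (y, c) ?_⟩
  · exact subset_convexHull ℝ _ (mem_biUnion hg ⟨x, hx, rfl⟩)
  · exact subset_convexHull ℝ _ (Or.inr ⟨x, hx, rfl⟩)
  · exact subset_convexHull ℝ _ (Or.inl ⟨y, hy, rfl⟩)

end Separation

theorem Continuous.measurable_baireSigma {Y G : Type*} [TopologicalSpace Y]
    [PseudoMetricSpace G] [MeasurableSpace G] [BorelSpace G] {f : Y → G} (hf : Continuous f) :
    Measurable[baireSigma Y] f := by
  let _ := baireSigma Y
  refine measurable_of_isOpen fun U hU => ?_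
  rcases Uᶜ.eq_empty_or_nonempty with hU' | hU'
  · rw [compl_empty_iff.1 hU', preimage_univ]
    exact .univ
  have : f ⁻¹' U = ((fun y => Metric.infDist (f y) Uᶜ) ⁻¹' {0})ᶜ := by
    ext y
    simp [← hU.isClosed_compl.mem_iff_infDist_zero hU']
  rw [this]
  refine (MeasurableSpace.measurableSet_generateFrom ?_).compl
  exact ⟨_, (Metric.continuous_infDist_pt _).comp hf, rfl⟩

section Barycenter

variable {E : Type*} [TopologicalSpace E]

-- Measures on `X` live on its Baire σ-algebra, as in `IsChoquetSimplex`.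
@[reducible] def baireSigmaOn (X : Set E) : MeasurableSpace X := baireSigma X

attribute [local instance] baireSigmaOn

theorem Continuous.integrable_of_isCompact {X : Set E} (hX : IsCompact X) (μ : Measure X)
    [IsFiniteMeasure μ] {G : Type*} [NormedAddCommGroup G] [MeasurableSpace G] [BorelSpace G]
    [SecondCountableTopology G] {φ : X → G} (hφ : Continuous φ) : Integrable φ μ := by
  have : CompactSpace X := isCompact_iff_compactSpace.1 hX
  obtain ⟨C, hC⟩ := isCompact_univ.exists_bound_of_continuousOn hφ.continuousOn
  exact .of_bound hφ.measurable_baireSigma.aestronglyMeasurable C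
    (.of_forall fun z => hC z (mem_univ z))

variable [AddCommGroup E] [Module ℝ E]

def IsBarycenter {X : Set E} (μ : Measure X) (x : E) : Prop :=
  ∀ ℓ : E →L[ℝ] ℝ, ℓ x = ∫ y, ℓ y ∂μ

namespace IsBarycenter

variable {X : Set E} {μ ν : Measure X} {x y : E}

theorem integral_continuousAffineMap [IsTopologicalAddGroup E] (hX : IsCompact X)
    [IsProbabilityMeasure μ] (h : IsBarycenter μ x) (a : E →ᴬ[ℝ] ℝ) : ∫ z, a z ∂μ = a x := by
  have ha : ∀ z, a z = a.contLinear z + a 0 := fun z => congrFun a.decomp z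
  have hℓ : Continuous fun z : X => a.contLinear z := by fun_prop
  rw [funext fun z : X => ha z, ha x, integral_add (hℓ.integrable_of_isCompact hX μ)
    (integrable_const _), integral_const, h]
  simp

theorem add (hX : IsCompact X) [IsFiniteMeasure μ] [IsFiniteMeasure ν] (hμ : IsBarycenter μ x)
    (hν : IsBarycenter ν y) {a b : ℝ} (ha : 0 ≤ a) (hb : 0 ≤ b) :
    IsBarycenter (ENNReal.ofReal a • μ + ENNReal.ofReal b • ν) (a • x + b • y) := by
  intro ℓ
  have hℓ : Continuous fun z : X => ℓ z := ℓ.continuous.comp continuous_subtype_val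
  rw [integral_add_measure
    ((hℓ.integrable_of_isCompact hX μ).smul_measure ENNReal.ofReal_ne_top)
    ((hℓ.integrable_of_isCompact hX ν).smul_measure ENNReal.ofReal_ne_top),
    integral_smul_measure, integral_smul_measure, ENNReal.toReal_ofReal ha,
    ENNReal.toReal_ofReal hb, ← hμ ℓ, ← hν ℓ]
  simp

theorem unique [IsTopologicalAddGroup E] [ContinuousSMul ℝ E] [LocallyConvexSpace ℝ E]
    [T2Space E] (hx : IsBarycenter μ x) (hy : IsBarycenter μ y) : x = y := by
  by_contra hxy
  obtain ⟨ℓ, hℓ⟩ := geometric_hahn_banach_point_point hxy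
  rw [hx ℓ, hy ℓ] at hℓ
  exact hℓ.false

end IsBarycenter

theorem exists_isBarycenter {X : Set E} (hX : IsCompact X) (hXc : Convex ℝ X)
    (μ : Measure X) [IsProbabilityMeasure μ] : ∃ x ∈ X, IsBarycenter μ x := by
  let t : (E →L[ℝ] ℝ) → Set E := fun ℓ => {x | ℓ x = ∫ z, ℓ z ∂μ}
  suffices h : (X ∩ ⋂ ℓ, t ℓ).Nonempty by
    obtain ⟨x, hx, hxt⟩ := h
    exact ⟨x, hx, fun ℓ => mem_iInter.1 hxt ℓ⟩
  refine hX.inter_iInter_nonempty t (fun ℓ => isClosed_eq ℓ.continuous continuous_const) ?_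
  intro S
  -- A barycentre for finitely many functionals: integrate the image in `S → ℝ`.
  let T : E →L[ℝ] (S → ℝ) := .pi fun ℓ => ℓ.1
  have hT : Integrable (fun z : X => T z) μ :=
    (T.continuous.comp continuous_subtype_val).integrable_of_isCompact hX μ
  obtain ⟨x, hx, hTx⟩ : ∫ z, T z ∂μ ∈ T '' X :=
    (hXc.linear_image T.toLinearMap).integral_mem ((hX.image T.continuous).isClosed)
      (.of_forall fun z => mem_image_of_mem T z.2) hT
  refine ⟨x, hx, mem_iInter₂.2 fun ℓ hℓ => show ℓ x = ∫ z, ℓ z ∂μ from ?_⟩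
  have := congrArg (ContinuousLinearMap.proj (R := ℝ) (⟨ℓ, hℓ⟩ : S)) hTx
  rw [← ContinuousLinearMap.integral_comp_comm _ hT] at this
  simpa [T] using this

def IsBoundaryRepresenting (X : Set E) (x : E) (μ : Measure X) : Prop :=
  IsProbabilityMeasure μ ∧ IsBarycenter μ x ∧
    ∀ s : Set X, MeasurableSet s → Disjoint (Subtype.val '' s) (extremePoints ℝ X) → μ s = 0

theorem IsBoundaryRepresenting.add {X : Set E} (hX : IsCompact X) {x y : E} {μ ν : Measure X}
    (hμ : IsBoundaryRepresenting X x μ) (hν : IsBoundaryRepresenting X y ν) {a b : ℝ}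
    (ha : 0 ≤ a) (hb : 0 ≤ b) (hab : a + b = 1) :
    IsBoundaryRepresenting X (a • x + b • y) (ENNReal.ofReal a • μ + ENNReal.ofReal b • ν) := by
  obtain ⟨hμp, hμb, hμ0⟩ := hμ
  obtain ⟨hνp, hνb, hν0⟩ := hν
  refine ⟨⟨?_⟩, hμb.add hX hνb ha hb, fun s hs hdisj => ?_⟩
  · simp [← ENNReal.ofReal_add ha hb, hab]
  · simp [hμ0 s hs hdisj, hν0 s hs hdisj]

end Barycenter

section Face

variable {E : Type*} [AddCommGroup E] [Module ℝ E] [TopologicalSpace E] [ContinuousAdd E]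
  [ContinuousSMul ℝ E] {X F : Set E}

-- The largest `s ∈ [0, 1]` with `s • y + (1 - s) • z ∈ F` is `1`: at any smaller `σ`, the
-- midpoint property would put `σ + min σ (1 - σ)` in that set as well.
theorem left_mem_of_combo_mem_of_midpoint_mem (hX : Convex ℝ X) (hF : IsClosed F)
    (hmid : ∀ y ∈ X, ∀ z ∈ X, (1 / 2 : ℝ) • y + (1 / 2 : ℝ) • z ∈ F → y ∈ F ∧ z ∈ F)
    {y z : E} (hy : y ∈ X) (hz : z ∈ X) {t : ℝ} (ht₀ : 0 < t) (ht₁ : t ≤ 1)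
    (hmem : t • y + (1 - t) • z ∈ F) : y ∈ F := by
  let g : ℝ → E := fun s => s • y + (1 - s) • z
  have hgX : ∀ s ∈ Icc (0 : ℝ) 1, g s ∈ X := fun s hs =>
    hX hy hz hs.1 (sub_nonneg.2 hs.2) (add_sub_cancel _ _)
  let S := Icc (0 : ℝ) 1 ∩ g ⁻¹' F
  have htS : t ∈ S := ⟨⟨ht₀.le, ht₁⟩, hmem⟩
  have hbdd : BddAbove S := ⟨1, fun s hs => hs.1.2⟩
  have hσS : sSup S ∈ S :=
    (isClosed_Icc.inter (hF.preimage (by fun_prop))).csSup_mem ⟨t, htS⟩ hbdd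
  suffices hσ : sSup S = 1 by simpa [g, hσ] using hσS.2
  by_contra hσ
  set σ := sSup S
  set d := min σ (1 - σ)
  have hd : 0 < d := lt_min (ht₀.trans_le (le_csSup hbdd htS))
    (sub_pos.2 (lt_of_le_of_ne hσS.1.2 hσ))
  have hup : σ + d ∈ Icc (0 : ℝ) 1 :=
    ⟨by linarith [hσS.1.1], by linarith [min_le_right σ (1 - σ)]⟩
  have hdown : σ - d ∈ Icc (0 : ℝ) 1 :=
    ⟨by linarith [min_le_left σ (1 - σ)], by linarith [hσS.1.2]⟩
  have hmidσ : (1 / 2 : ℝ) • g (σ + d) + (1 / 2 : ℝ) • g (σ - d) = g σ := by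
    simp only [g]
    module
  have : σ + d ∈ S := ⟨hup, (hmid _ (hgX _ hup) _ (hgX _ hdown) (hmidσ ▸ hσS.2)).1⟩
  linarith [le_csSup hbdd this]

theorem isExtreme_of_midpoint_mem (hX : Convex ℝ X) (hF : IsClosed F) (hFX : F ⊆ X)
    (hmid : ∀ y ∈ X, ∀ z ∈ X, (1 / 2 : ℝ) • y + (1 / 2 : ℝ) • z ∈ F → y ∈ F ∧ z ∈ F) :
    IsExtreme ℝ X F := by
  refine ⟨hFX, fun y hy z hz x hx ⟨a, b, ha, hb, hab, hxab⟩ => ?_⟩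
  rw [← hxab, eq_sub_of_add_eq' hab] at hx
  exact left_mem_of_combo_mem_of_midpoint_mem hX hF hmid hy hz ha (by linarith) hx

end Face

theorem MeasureTheory.Measure.eq_smul_cond_add_smul_cond_compl {Ω : Type*} [MeasurableSpace Ω]
    (μ : Measure Ω) [IsFiniteMeasure μ] {s : Set Ω} (hs : MeasurableSet s) :
    μ = μ s • μ[|s] + μ sᶜ • μ[|sᶜ] := by
  ext t ht
  rw [Measure.add_apply, Measure.smul_apply, Measure.smul_apply, smul_eq_mul, smul_eq_mul,
    mul_comm (μ s), mul_comm (μ sᶜ), cond_add_cond_compl_eq hs μ]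

section ConditionedBarycenter

variable {E : Type*} [AddCommGroup E] [Module ℝ E] [TopologicalSpace E]
  [IsTopologicalAddGroup E] [ContinuousSMul ℝ E] [LocallyConvexSpace ℝ E] [T2Space E]

attribute [local instance] baireSigmaOn

variable {X F : Set E} {μ : Measure X} [IsProbabilityMeasure μ] {y : E}

theorem IsExtreme.exists_isBarycenter_cond (hX : IsCompact X) (hXc : Convex ℝ X)
    (hF : IsExtreme ℝ X F) (hy : y ∈ F) (hμ : IsBarycenter μ y) {s : Set X}
    (hs : MeasurableSet s) (hμs : μ s ≠ 0) : ∃ b ∈ F, IsBarycenter μ[|s] b := by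
  have := cond_isProbabilityMeasure hμs
  obtain ⟨b₁, hb₁X, hb₁⟩ := exists_isBarycenter hX hXc μ[|s]
  refine ⟨b₁, ?_, hb₁⟩
  have hμeq := μ.eq_smul_cond_add_smul_cond_compl hs
  by_cases hμs' : μ sᶜ = 0
  · have h1 : μ s = 1 := by rwa [prob_compl_eq_zero_iff hs] at hμs'
    rw [hμs', h1, zero_smul, add_zero, one_smul] at hμeq
    rw [← hμeq] at hb₁
    rwa [hμ.unique hb₁] at hy
  have := cond_isProbabilityMeasure hμs'
  obtain ⟨b₂, hb₂X, hb₂⟩ := exists_isBarycenter hX hXc μ[|sᶜ]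
  have hsum : (μ s).toReal + (μ sᶜ).toReal = 1 := by
    rw [← ENNReal.toReal_add (measure_ne_top μ s) (measure_ne_top μ sᶜ),
      measure_add_measure_compl hs, measure_univ, ENNReal.toReal_one]
  have hb := hb₁.add hX hb₂ (ENNReal.toReal_nonneg (a := μ s))
    (ENNReal.toReal_nonneg (a := μ sᶜ))
  rw [ENNReal.ofReal_toReal (measure_ne_top μ s), ENNReal.ofReal_toReal (measure_ne_top μ sᶜ),
    ← hμeq] at hb
  refine hF.left_mem_of_mem_openSegment hb₁X hb₂X hy ⟨_, _, ?_, ?_, hsum, (hμ.unique hb).symm⟩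
  · exact ENNReal.toReal_pos hμs (measure_ne_top μ s)
  · exact ENNReal.toReal_pos hμs' (measure_ne_top μ sᶜ)

theorem IsBarycenter.ae_nonpos_of_isExtreme (hX : IsCompact X) (hXc : Convex ℝ X)
    (hF : IsExtreme ℝ X F) (hy : y ∈ F) (hμ : IsBarycenter μ y) (g : E →ᴬ[ℝ] ℝ)
    (hg : ∀ z ∈ F, g z ≤ 0) : ∀ᵐ z : X ∂μ, g z ≤ 0 := by
  have hgc : Continuous fun z : X => g z := by fun_prop
  have hε : ∀ ε : ℝ, 0 < ε → μ {z : X | ε ≤ g z} = 0 := by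
    intro ε hε
    by_contra hμs
    have hs : MeasurableSet {z : X | ε ≤ g z} :=
      measurableSet_le measurable_const hgc.measurable_baireSigma
    obtain ⟨b, hbF, hb⟩ := hF.exists_isBarycenter_cond hX hXc hy hμ hs hμs
    have := cond_isProbabilityMeasure hμs
    have : ε ≤ g b := by
      rw [← hb.integral_continuousAffineMap hX g]
      calc ε = ∫ _, ε ∂μ[|{z : X | ε ≤ g z}] := by simp
        _ ≤ _ := integral_mono_ae (integrable_const ε) (hgc.integrable_of_isCompact hX _)
            (ae_cond_mem hs)
    linarith [hg b hbF]
  have : {z : X | ¬ g z ≤ 0} = ⋃ n : ℕ, {z : X | 1 / (n + 1 : ℝ) ≤ g z} := by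
    ext z
    simp only [not_le, mem_ofPred_eq, mem_iUnion]
    exact ⟨fun h => (exists_nat_one_div_lt h).imp fun n => le_of_lt,
      fun ⟨n, hn⟩ => lt_of_lt_of_le Nat.one_div_pos_of_nat hn⟩
  rw [ae_iff, this]
  exact measure_iUnion_null fun n => hε _ Nat.one_div_pos_of_nat

end ConditionedBarycenter

section ChoquetSimplex

variable {E : Type*} [AddCommGroup E] [Module ℝ E] [TopologicalSpace E]
  [IsTopologicalAddGroup E] [ContinuousSMul ℝ E] [LocallyConvexSpace ℝ E] [T2Space E]

attribute [local instance] baireSigmaOn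

namespace IsChoquetSimplex

variable {X : Set E} {x y : E}

open Classical in
-- The junk value for `x ∉ X` is the zero measure.
noncomputable def repMeasure (hX : IsChoquetSimplex X) (x : E) : Measure X :=
  if hx : x ∈ X then (hX.2.2 x hx).exists.choose else 0

theorem isBoundaryRepresenting_repMeasure (hX : IsChoquetSimplex X) (hx : x ∈ X) :
    IsBoundaryRepresenting X x (hX.repMeasure x) := by
  rw [repMeasure, dif_pos hx]
  exact (hX.2.2 x hx).exists.choose_spec

theorem repMeasure_eq (hX : IsChoquetSimplex X) (hx : x ∈ X) {μ : Measure X}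
    (hμ : IsBoundaryRepresenting X x μ) : hX.repMeasure x = μ :=
  (hX.2.2 x hx).unique (hX.isBoundaryRepresenting_repMeasure hx) hμ

theorem integral_repMeasure_add (hX : IsChoquetSimplex X) {φ : X → ℝ} (hφ : Continuous φ)
    (hx : x ∈ X) (hy : y ∈ X) {a b : ℝ} (ha : 0 ≤ a) (hb : 0 ≤ b) (hab : a + b = 1) :
    ∫ z, φ z ∂hX.repMeasure (a • x + b • y) =
      a * ∫ z, φ z ∂hX.repMeasure x + b * ∫ z, φ z ∂hX.repMeasure y := by
  have hμ := hX.isBoundaryRepresenting_repMeasure hx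
  have hν := hX.isBoundaryRepresenting_repMeasure hy
  have := hμ.1
  have := hν.1
  rw [hX.repMeasure_eq (hX.2.1 hx hy ha hb hab) (hμ.add hX.1 hν ha hb hab),
    integral_add_measure
      ((hφ.integrable_of_isCompact hX.1 _).smul_measure ENNReal.ofReal_ne_top)
      ((hφ.integrable_of_isCompact hX.1 _).smul_measure ENNReal.ofReal_ne_top),
    integral_smul_measure, integral_smul_measure, ENNReal.toReal_ofReal ha,
    ENNReal.toReal_ofReal hb, smul_eq_mul, smul_eq_mul]

theorem convexOn_integral_repMeasure (hX : IsChoquetSimplex X) {φ : X → ℝ}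
    (hφ : Continuous φ) : ConvexOn ℝ X fun x => ∫ z, φ z ∂hX.repMeasure x :=
  ⟨hX.2.1, fun _ hx _ hy _ _ ha hb hab => (hX.integral_repMeasure_add hφ hx hy ha hb hab).le⟩

theorem concaveOn_integral_repMeasure (hX : IsChoquetSimplex X) {φ : X → ℝ}
    (hφ : Continuous φ) : ConcaveOn ℝ X fun x => ∫ z, φ z ∂hX.repMeasure x :=
  ⟨hX.2.1, fun _ hx _ hy _ _ ha hb hab => (hX.integral_repMeasure_add hφ hx hy ha hb hab).ge⟩

theorem le_integral_repMeasure (hX : IsChoquetSimplex X) (hx : x ∈ X) {φ : X → ℝ}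
    (hφ : Continuous φ) {g : E →ᴬ[ℝ] ℝ} (hg : ∀ z : X, g z ≤ φ z) :
    g x ≤ ∫ z, φ z ∂hX.repMeasure x := by
  obtain ⟨_, hbar, -⟩ := hX.isBoundaryRepresenting_repMeasure hx
  rw [← hbar.integral_continuousAffineMap hX.1 g]
  exact integral_mono ((show Continuous fun z : X => g z by fun_prop).integrable_of_isCompact
    hX.1 _) (hφ.integrable_of_isCompact hX.1 _) hg

theorem integral_repMeasure_le (hX : IsChoquetSimplex X) (hx : x ∈ X) {φ : X → ℝ}
    (hφ : Continuous φ) {g : E →ᴬ[ℝ] ℝ} (hg : ∀ z : X, φ z ≤ g z) :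
    ∫ z, φ z ∂hX.repMeasure x ≤ g x := by
  obtain ⟨_, hbar, -⟩ := hX.isBoundaryRepresenting_repMeasure hx
  rw [← hbar.integral_continuousAffineMap hX.1 g]
  exact integral_mono (hφ.integrable_of_isCompact hX.1 _)
    ((show Continuous fun z : X => g z by fun_prop).integrable_of_isCompact hX.1 _) hg

end IsChoquetSimplex

end ChoquetSimplex

theorem tendstoUniformlyOn_limUnder_of_dist_le_geometric {α β : Type*} [PseudoMetricSpace β]
    [CompleteSpace β] [Nonempty β] {P : ℕ → α → β} {s : Set α} {C r : ℝ} (hr₀ : 0 ≤ r)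
    (hr : r < 1)
    (h : ∀ n, ∀ x ∈ s, dist (P n x) (P (n + 1) x) ≤ C * r ^ n) :
    TendstoUniformlyOn P (fun x => limUnder atTop fun n => P n x) atTop s := by
  have hlim : ∀ x ∈ s, Tendsto (P · x) atTop (𝓝 (limUnder atTop fun n => P n x)) :=
    fun x hx => (cauchySeq_of_le_geometric r C hr (h · x hx)).tendsto_limUnder
  have hbound : Tendsto (fun n : ℕ => C * r ^ n / (1 - r)) atTop (𝓝 0) := by
    simpa using ((tendsto_pow_atTop_nhds_zero_of_lt_one hr₀ hr).const_mul C).div_const (1 - r)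
  rw [Metric.tendstoUniformlyOn_iff]
  intro ε hε
  filter_upwards [hbound.eventually (gt_mem_nhds hε)] with n hn x hx
  rw [dist_comm]
  exact (dist_le_of_le_geometric_of_tendsto r C hr (h · x hx) (hlim x hx) n).trans_lt hn

section Exposing

variable {E : Type*} [AddCommGroup E] [Module ℝ E] [TopologicalSpace E]
  [IsTopologicalAddGroup E] [ContinuousSMul ℝ E] [LocallyConvexSpace ℝ E] [T2Space E]
  {X F : Set E}

attribute [local instance] baireSigmaOn

theorem IsChoquetSimplex.exists_approx_step (hX : IsChoquetSimplex X) (hXne : X.Nonempty)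
    (hF : IsExtreme ℝ X F) (hFc : IsClosed F) (hFconv : Convex ℝ F) {b p : E →ᴬ[ℝ] ℝ}
    (hbF : ∀ y ∈ F, b y ≤ 0) {δ δ' : ℝ} (hδ : 0 < δ) (hδ' : 0 < δ')
    (hpX : ∀ x ∈ X, b x ≤ p x ∧ 0 ≤ p x) (hpF : ∀ y ∈ F, p y ≤ δ) :
    ∃ q : E →ᴬ[ℝ] ℝ, (∀ x ∈ X, b x ≤ q x ∧ 0 ≤ q x) ∧ (∀ y ∈ F, q y ≤ δ') ∧
      ∀ x ∈ X, dist (p x) (q x) ≤ δ := by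
  classical
  set p' : E →ᴬ[ℝ] ℝ := p - .const ℝ E δ
  have hp' : ∀ x, p' x = p x - δ := fun x => rfl
  let φ : X → ℝ := fun z => max (max (b z) 0) (p' z)
  have hφ : Continuous φ := by fun_prop
  set Φ : E → ℝ := fun x => ∫ z, φ z ∂hX.repMeasure x
  have hLΦ : ∀ g ∈ ({b, 0, p'} : Finset (E →ᴬ[ℝ] ℝ)), ∀ x ∈ X, g x ≤ Φ x := by
    intro g hg x hx
    refine hX.le_integral_repMeasure hx hφ fun z => ?_
    simp only [Finset.mem_insert, Finset.mem_singleton] at hg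
    rcases hg with rfl | rfl | rfl
    · exact (le_max_left _ _).trans (le_max_left _ _)
    · exact (le_max_right _ _).trans (le_max_left _ _)
    · exact le_max_right _ _
  have huΦ : ∀ x ∈ X, Φ x < (p + .const ℝ E δ) x := by
    intro x hx
    refine (hX.integral_repMeasure_le hx hφ (g := p) fun z => ?_).trans_lt ?_
    · exact max_le (max_le (hpX z z.2).1 (hpX z z.2).2) (by rw [hp']; linarith)
    · simp [hδ]
  -- The representing measure of a point of `F` lives where `b ≤ 0` and `p' ≤ 0`.
  have hΦF : ∀ y ∈ F, Φ y < δ' := by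
    intro y hy
    have hrep := hX.isBoundaryRepresenting_repMeasure (hF.subset hy)
    have := hrep.1
    refine (integral_nonpos_of_ae ?_).trans_lt hδ'
    filter_upwards [hrep.2.1.ae_nonpos_of_isExtreme hX.1 hX.2.1 hF hy b hbF,
      hrep.2.1.ae_nonpos_of_isExtreme hX.1 hX.2.1 hF hy p'
        fun z hz => by rw [hp']; linarith [hpF z hz]] with z h₁ h₂
    exact max_le (max_le h₁ le_rfl) h₂
  obtain ⟨q, hqL, hqu, hqF⟩ := exists_continuousAffineMap_between hX.1 hXne
    (hX.1.of_isClosed_subset hFc hF.subset) hFconv hF.subset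
    (hX.convexOn_integral_repMeasure hφ) (hX.concaveOn_integral_repMeasure hφ)
    (Finset.insert_nonempty _ _) hLΦ huΦ hΦF
  refine ⟨q, fun x hx => ⟨(hqL b (by simp) x hx).le, (hqL 0 (by simp) x hx).le⟩,
    fun y hy => (hqF y hy).le, fun x hx => ?_⟩
  have h₁ := hqL p' (by simp) x hx
  have h₂ := hqu x hx
  rw [hp'] at h₁
  rw [ContinuousAffineMap.add_apply, ContinuousAffineMap.coe_const, Function.const_apply] at h₂
  rw [Real.dist_eq, abs_le]
  constructor <;> linarith

theorem IsChoquetSimplex.exists_seq_approx (hX : IsChoquetSimplex X) (hXne : X.Nonempty)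
    (hF : IsExtreme ℝ X F) (hFc : IsClosed F) (hFconv : Convex ℝ F) {b : E →ᴬ[ℝ] ℝ}
    (hbF : ∀ y ∈ F, b y ≤ 0) :
    ∃ C : ℝ, ∃ P : ℕ → E →ᴬ[ℝ] ℝ, ∀ n, (∀ x ∈ X, b x ≤ P n x ∧ 0 ≤ P n x) ∧
      (∀ y ∈ F, P n y ≤ C * (1 / 2) ^ n) ∧
      ∀ x ∈ X, dist (P n x) (P (n + 1) x) ≤ C * (1 / 2) ^ n := by
  obtain ⟨M, hM⟩ := hX.1.bddAbove_image b.continuous.continuousOn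
  set C := max M 1
  have hC : 0 < C := lt_max_of_lt_right one_pos
  have hstep : ∀ n (p : E →ᴬ[ℝ] ℝ),
      (∀ x ∈ X, b x ≤ p x ∧ 0 ≤ p x) ∧ (∀ y ∈ F, p y ≤ C * (1 / 2) ^ n) →
      ∃ q : E →ᴬ[ℝ] ℝ,
        ((∀ x ∈ X, b x ≤ q x ∧ 0 ≤ q x) ∧ ∀ y ∈ F, q y ≤ C * (1 / 2) ^ (n + 1)) ∧
        ∀ x ∈ X, dist (p x) (q x) ≤ C * (1 / 2) ^ n := fun n p hp => by
    obtain ⟨q, h₁, h₂, h₃⟩ := hX.exists_approx_step hXne hF hFc hFconv hbF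
      (δ' := C * (1 / 2) ^ (n + 1)) (by positivity) (by positivity) hp.1 hp.2
    exact ⟨q, ⟨h₁, h₂⟩, h₃⟩
  choose! next hnext using hstep
  let P : ℕ → E →ᴬ[ℝ] ℝ := fun n => Nat.rec (.const ℝ E C) next n
  have hP : ∀ n, (∀ x ∈ X, b x ≤ P n x ∧ 0 ≤ P n x) ∧ ∀ y ∈ F, P n y ≤ C * (1 / 2) ^ n := by
    intro n
    induction n with
    | zero =>
      refine ⟨fun x hx => ⟨(hM ⟨x, hx, rfl⟩).trans (le_max_left _ _), hC.le⟩, fun y _ => ?_⟩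
      simp [P]
    | succ n ih => exact (hnext n (P n) ih).1
  exact ⟨C, P, fun n => ⟨(hP n).1, (hP n).2, (hnext n (P n) (hP n)).2⟩⟩

end Exposing

/-- **Proposition 2.4.** Every closed face `F` of a Choquet simplex `X` is relatively
exposed: for `x₀ ∈ X \ F` there is a continuous affine function `f : X → [0, ∞)` with
`f = 0` on `F` and `f(x₀) > 0`. -/
theorem closed_face_relatively_exposed
    {E : Type*} [AddCommGroup E] [Module ℝ E] [TopologicalSpace E]
    [IsTopologicalAddGroup E] [ContinuousSMul ℝ E] [LocallyConvexSpace ℝ E] [T2Space E]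
    (X : Set E) (hX : IsChoquetSimplex X)
    (F : Set E) (hFX : F ⊆ X) (hFclosed : IsClosed F) (hFconvex : Convex ℝ F)
    (hFface : ∀ y ∈ X, ∀ z ∈ X, ((1/2 : ℝ) • y + (1/2 : ℝ) • z) ∈ F → y ∈ F ∧ z ∈ F)
    (x₀ : E) (hx₀X : x₀ ∈ X) (hx₀F : x₀ ∉ F) :
    ∃ f : E → ℝ, ContinuousOn f X ∧
      (∀ y ∈ X, ∀ z ∈ X, ∀ t : ℝ, 0 ≤ t → t ≤ 1 →
        f (t • y + (1 - t) • z) = t * f y + (1 - t) * f z) ∧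
      (∀ x ∈ X, 0 ≤ f x) ∧ (∀ x ∈ F, f x = 0) ∧ 0 < f x₀ := by
  have hF : IsExtreme ℝ X F := isExtreme_of_midpoint_mem hX.2.1 hFclosed hFX hFface
  obtain ⟨ℓ, r, hℓF, hℓx₀⟩ := geometric_hahn_banach_closed_point hFconvex hFclosed hx₀F
  let b : E →ᴬ[ℝ] ℝ := ℓ.toContinuousAffineMap - .const ℝ E r
  have hb : ∀ x, b x = ℓ x - r := fun x => rfl
  obtain ⟨C, P, hP⟩ := hX.exists_seq_approx ⟨x₀, hx₀X⟩ hF hFclosed hFconvex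
    fun y hy => by linarith [hb y, hℓF y hy]
  let f : E → ℝ := fun x => limUnder atTop fun n => P n x
  have hf : TendstoUniformlyOn (fun n x => P n x) f atTop X :=
    tendstoUniformlyOn_limUnder_of_dist_le_geometric (by norm_num) (by norm_num)
      fun n => (hP n).2.2
  have hlim : ∀ x ∈ X, Tendsto (fun n => P n x) atTop (𝓝 (f x)) :=
    fun x hx => hf.tendsto_at hx
  have hf₀ : ∀ x ∈ X, 0 ≤ f x :=
    fun x hx => ge_of_tendsto' (hlim x hx) fun n => ((hP n).1 x hx).2
  refine ⟨f, hf.continuousOn (.of_forall fun n => (P n).continuous.continuousOn), ?_, hf₀,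
    fun y hy => le_antisymm ?_ (hf₀ y (hFX hy)), ?_⟩
  · intro y hy z hz t ht₀ ht₁
    refine tendsto_nhds_unique (hlim _ (hX.2.1 hy hz ht₀ (by linarith) (by ring))) ?_
    refine (((hlim y hy).const_mul t).add ((hlim z hz).const_mul (1 - t))).congr fun n => ?_
    simpa using
      (Convex.combo_affine_apply (add_sub_cancel t 1) (f := (P n : E →ᵃ[ℝ] ℝ))).symm
  · refine le_of_tendsto_of_tendsto' (hlim y (hFX hy)) ?_ fun n => (hP n).2.1 y hy
    simpa using (tendsto_pow_atTop_nhds_zero_of_lt_one (r := (1 / 2 : ℝ)) (by norm_num)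
      (by norm_num)).const_mul C
  · exact (by linarith [hb x₀] : 0 < b x₀).trans_le
      (ge_of_tendsto' (hlim x₀ hx₀X) fun n => ((hP n).1 x₀ hx₀X).1)
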